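/- arXiv:2602.18737 — 4 statements merged into one kernel-verified Lean document; each statement's English description precedes it below -/
import Mathlib

section
/- For s > 1 and l ≥ 3, |t · F'_{s,l}(t)| ≤ 4s · F_{s,l}(t) for every real t. -/
noncomputable def Fsl (s l t : ℝ) : ℝ :=
  if |t| ≤ l then |t| ^ s
  else (1 - s^2) * l ^ s + (1/2) * s * (s+1) * l ^ (s-1) * |t|
        + (1/2) * s * (s-1) * l ^ (s+1) * |t|⁻¹

/-! On `|t| ≤ l` we have `t F'(t) = s F(t)`. Beyond `l` the function is the rational tail
`l^s ((1 - s²) + s(s+1) t / (2l) + s(s-1) l / (2t))`, glued to `|t|^s` with matching value and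
derivative; there `t F'(t)` and `F(t)` share the positive factor `s l^s / (2 l t)`, and the claim
reduces to a quadratic inequality in `t` and `l` valid for `l ≤ t`. Evenness handles `t < 0`. -/

open Real Set

noncomputable def FslOuter (s l t : ℝ) : ℝ :=
  (1 - s^2) * l ^ s + (1/2) * s * (s+1) * l ^ (s-1) * t + (1/2) * s * (s-1) * l ^ (s+1) * t⁻¹

noncomputable def FslOuterDeriv (s l t : ℝ) : ℝ :=
  (1/2) * s * (s+1) * l ^ (s-1) - (1/2) * s * (s-1) * l ^ (s+1) / t ^ 2

section

variable {s l t : ℝ}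

theorem Fsl_neg : Fsl s l (-t) = Fsl s l t := by
  simp only [Fsl, abs_neg]

theorem deriv_Fsl_neg : deriv (Fsl s l) (-t) = -deriv (Fsl s l) t := by
  have h : Fsl s l = fun u => Fsl s l (-u) := funext fun _ => Fsl_neg.symm
  conv_rhs => rw [h]
  rw [deriv_comp_neg, neg_neg]

theorem Fsl_zero (hs : 0 < s) (hl : 0 ≤ l) : Fsl s l 0 = 0 := by
  simp [Fsl, hl, zero_rpow hs.ne']

theorem Fsl_of_nonneg_of_le (ht : 0 ≤ t) (htl : t ≤ l) : Fsl s l t = t ^ s := by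
  simp [Fsl, abs_of_nonneg ht, htl]

theorem Fsl_of_lt (hl : 0 ≤ l) (htl : l < t) : Fsl s l t = FslOuter s l t := by
  simp [Fsl, FslOuter, abs_of_pos (hl.trans_lt htl), htl.not_ge]

theorem FslOuter_self (hl : 0 < l) : FslOuter s l l = l ^ s := by
  rw [FslOuter, rpow_sub_one hl.ne', rpow_add_one hl.ne']
  field_simp
  ring

theorem hasDerivAt_FslOuter (ht : t ≠ 0) :
    HasDerivAt (FslOuter s l) (FslOuterDeriv s l t) t := by
  have h : HasDerivAt (FslOuter s l) _ t :=
    (((hasDerivAt_id t).const_mul ((1/2) * s * (s+1) * l ^ (s-1))).const_add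
      ((1 - s^2) * l ^ s)).add ((hasDerivAt_inv ht).const_mul ((1/2) * s * (s-1) * l ^ (s+1)))
  exact h.congr_deriv (by rw [FslOuterDeriv]; ring)

theorem FslOuterDeriv_self (hl : 0 < l) : FslOuterDeriv s l l = s * l ^ (s - 1) := by
  rw [FslOuterDeriv, rpow_sub_one hl.ne', rpow_add_one hl.ne']
  field_simp
  ring

theorem hasDerivAt_Fsl_of_pos_of_le (ht : 0 < t) (htl : t ≤ l) :
    HasDerivAt (Fsl s l) (s * t ^ (s - 1)) t := by
  have hpow := hasDerivAt_rpow_const (p := s) (Or.inl ht.ne')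
  rcases htl.lt_or_eq with htl | rfl
  · refine hpow.congr_of_eventuallyEq ?_
    filter_upwards [Ioo_mem_nhds ht htl] with u hu
    exact Fsl_of_nonneg_of_le hu.1.le hu.2.le
  · have hinner : HasDerivWithinAt (Fsl s t) (s * t ^ (s - 1)) (Icc 0 t) t :=
      hpow.hasDerivWithinAt.congr (fun u hu => Fsl_of_nonneg_of_le hu.1 hu.2)
        (Fsl_of_nonneg_of_le ht.le le_rfl)
    have houter : HasDerivWithinAt (Fsl s t) (s * t ^ (s - 1)) (Ici t) t := by
      have hFt : Fsl s t t = FslOuter s t t := by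
        rw [Fsl_of_nonneg_of_le ht.le le_rfl, FslOuter_self ht]
      rw [← FslOuterDeriv_self ht]
      refine (hasDerivAt_FslOuter ht.ne').hasDerivWithinAt.congr (fun u hu => ?_) hFt
      rcases (mem_Ici.mp hu).lt_or_eq with hu | rfl
      · exact Fsl_of_lt ht.le hu
      · exact hFt
    refine (hinner.union houter).hasDerivAt ?_
    rw [Icc_union_Ici_eq_Ici ht.le]
    exact Ici_mem_nhds ht

theorem hasDerivAt_Fsl_of_lt (hl : 0 ≤ l) (htl : l < t) :
    HasDerivAt (Fsl s l) (FslOuterDeriv s l t) t := by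
  refine (hasDerivAt_FslOuter (hl.trans_lt htl).ne').congr_of_eventuallyEq ?_
  filter_upwards [Ioi_mem_nhds htl] with u hu
  exact Fsl_of_lt hl hu

theorem abs_sq_sub_sq_le (hs : 1 ≤ s) (hl : 0 ≤ l) (htl : l ≤ t) :
    |(s + 1) * t ^ 2 - (s - 1) * l ^ 2|
      ≤ 4 * (s * (s + 1) * t ^ 2 - 2 * (s ^ 2 - 1) * l * t + s * (s - 1) * l ^ 2) := by
  have hd : 0 ≤ t - l := sub_nonneg.mpr htl
  rw [abs_le]
  constructor <;> nlinarith [mul_nonneg (mul_nonneg hl hd) (by linarith : (0:ℝ) ≤ s - 1),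
    mul_nonneg (mul_nonneg hd hd) (by linarith : (0:ℝ) ≤ s - 1), mul_nonneg hl hd,
    mul_nonneg hl hl, mul_nonneg hd hd]

theorem abs_mul_FslOuterDeriv_le (hs : 1 ≤ s) (hl : 0 < l) (htl : l ≤ t) :
    |t * FslOuterDeriv s l t| ≤ 4 * s * FslOuter s l t := by
  have ht : 0 < t := hl.trans_le htl
  have hc : 0 < s * l ^ s / (2 * l * t) := by have := rpow_pos_of_pos hl s; positivity
  have hderiv : t * FslOuterDeriv s l t
      = s * l ^ s / (2 * l * t) * ((s + 1) * t ^ 2 - (s - 1) * l ^ 2) := by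
    rw [FslOuterDeriv, rpow_sub_one hl.ne', rpow_add_one hl.ne']
    field_simp
  have hvalue : 4 * s * FslOuter s l t = s * l ^ s / (2 * l * t) *
      (4 * (s * (s + 1) * t ^ 2 - 2 * (s ^ 2 - 1) * l * t + s * (s - 1) * l ^ 2)) := by
    rw [FslOuter, rpow_sub_one hl.ne', rpow_add_one hl.ne']
    field_simp
    ring
  rw [hderiv, hvalue, abs_mul, abs_of_pos hc]
  exact mul_le_mul_of_nonneg_left (abs_sq_sub_sq_le hs hl.le htl) hc.le

theorem abs_mul_deriv_Fsl_le_of_pos (hs : 1 ≤ s) (hl : 0 < l) (ht : 0 < t) :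
    |t * deriv (Fsl s l) t| ≤ 4 * s * Fsl s l t := by
  rcases le_or_gt t l with htl | htl
  · have hts : t * (s * t ^ (s - 1)) = s * t ^ s := by
      rw [rpow_sub_one ht.ne']
      field_simp
    have := rpow_pos_of_pos ht s
    rw [(hasDerivAt_Fsl_of_pos_of_le ht htl).deriv, Fsl_of_nonneg_of_le ht.le htl, hts,
      abs_of_pos (by positivity)]
    nlinarith
  · rw [(hasDerivAt_Fsl_of_lt hl.le htl).deriv, Fsl_of_lt hl.le htl]
    exact abs_mul_FslOuterDeriv_le hs hl htl.le

end

theorem stmt_7 (s l : ℝ) (hs : 1 < s) (hl : 3 ≤ l) (t : ℝ) :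
    |t * deriv (Fsl s l) t| ≤ 4 * s * Fsl s l t := by
  have hl0 : 0 < l := by linarith
  rcases lt_trichotomy t 0 with ht | rfl | ht
  · have h := abs_mul_deriv_Fsl_le_of_pos hs.le hl0 (neg_pos.mpr ht)
    rwa [deriv_Fsl_neg, Fsl_neg, neg_mul_neg] at h
  · rw [Fsl_zero (by linarith) hl0.le]
    simp
  · exact abs_mul_deriv_Fsl_le_of_pos hs.le hl0 ht
end

section
/- For s > 1 and l ≥ 3, setting G_{s,l} = F_{s,l} · F'_{s,l}, one has |F'_{s,l}(t)|² ≤ s² · G'_{s,l}(t) for every real t. -/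
noncomputable def Gsl (s l t : ℝ) : ℝ := Fsl s l t * deriv (Fsl s l) t

open Filter Topology Set Asymptotics

theorem hasDerivAt_ite_le {f g : ℝ → ℝ} {f' g' a x : ℝ}
    (hf : x ≤ a → HasDerivAt f f' x) (hg : a ≤ x → HasDerivAt g g' x)
    (ha : f a = g a) (ha' : x = a → f' = g') :
    HasDerivAt (fun y => if y ≤ a then f y else g y) (if x ≤ a then f' else g') x := by
  rcases lt_trichotomy x a with hxa | rfl | hax
  · rw [if_pos hxa.le]
    refine (hf hxa.le).congr_of_eventuallyEq ?_
    filter_upwards [Iio_mem_nhds hxa] with y hy using if_pos (le_of_lt hy)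
  · rw [if_pos le_rfl]
    have hL : HasDerivWithinAt (fun y => if y ≤ x then f y else g y) f' (Iic x) x :=
      (hf le_rfl).hasDerivWithinAt.congr (fun y hy => if_pos hy) (if_pos le_rfl)
    have hR : HasDerivWithinAt (fun y => if y ≤ x then f y else g y) f' (Ici x) x := by
      refine (ha' rfl ▸ hg le_rfl).hasDerivWithinAt.congr (fun y hy => ?_) (by simp [ha])
      rcases (mem_Ici.1 hy).eq_or_lt with rfl | hxy
      · simp [ha]
      · exact if_neg (not_le.2 hxy)
    simpa [Iic_union_Ici] using hL.union hR
  · rw [if_neg (not_le.2 hax)]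
    refine (hg hax.le).congr_of_eventuallyEq ?_
    filter_upwards [Ioi_mem_nhds hax] with y hy using if_neg (not_le.2 hy)

theorem HasDerivAt.mul_isBigO_one_of_eq_zero {f g : ℝ → ℝ} {x : ℝ} (hf : HasDerivAt f 0 x)
    (hfx : f x = 0) (hg : g =O[𝓝 x] fun _ => (1 : ℝ)) : HasDerivAt (fun y => f y * g y) 0 x := by
  rw [hasDerivAt_iff_isLittleO] at hf ⊢
  simp only [hfx, zero_mul, sub_zero, smul_zero] at hf ⊢
  simpa using hf.mul_isBigO hg

lemma rpow_eq_rpow_mul_pow_of_eq_add {l a b : ℝ} (hl : 0 < l) (n : ℕ) (h : a = b + n) :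
    l ^ a = l ^ b * l ^ n := by
  rw [h, Real.rpow_add_natCast hl.ne']

/-- `Fsl s l t` is definitionally `fslProfile s l |t|`. -/
noncomputable def fslProfile (s l x : ℝ) : ℝ :=
  if x ≤ l then x ^ s
  else (1 - s^2) * l ^ s + (1/2) * s * (s+1) * l ^ (s-1) * x
        + (1/2) * s * (s-1) * l ^ (s+1) * x⁻¹

noncomputable def fslProfileDeriv (s l x : ℝ) : ℝ :=
  if x ≤ l then s * x ^ (s - 1)
  else (1/2) * s * (s+1) * l ^ (s-1) - (1/2) * s * (s-1) * l ^ (s+1) / x ^ 2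

noncomputable def fslProfileDeriv2 (s l x : ℝ) : ℝ :=
  if x ≤ l then s * (s - 1) * x ^ (s - 2)
  else s * (s-1) * l ^ (s+1) / x ^ 3

section Profile

variable {s l x : ℝ}

lemma hasDerivAt_fslProfile (hl : 0 < l) (hx : 0 < x) :
    HasDerivAt (fslProfile s l) (fslProfileDeriv s l x) x := by
  unfold fslProfile fslProfileDeriv
  refine hasDerivAt_ite_le (fun _ => Real.hasDerivAt_rpow_const (Or.inl hx.ne')) (fun hlx => ?_)
    ?_ fun hxl => ?_
  · refine ((((hasDerivAt_id x).const_mul _).const_add _).add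
      ((hasDerivAt_inv (hl.trans_le hlx).ne').const_mul _)).congr_deriv ?_
    field_simp
    ring
  · rw [rpow_eq_rpow_mul_pow_of_eq_add hl 1 (by push_cast; ring : s = s - 1 + (1 : ℕ)),
      rpow_eq_rpow_mul_pow_of_eq_add hl 2 (by push_cast; ring : s + 1 = s - 1 + (2 : ℕ))]
    field_simp
    ring
  · subst hxl
    rw [rpow_eq_rpow_mul_pow_of_eq_add hl 2 (by push_cast; ring : s + 1 = s - 1 + (2 : ℕ))]
    field_simp
    ring

lemma hasDerivAt_fslProfileDeriv (hl : 0 < l) (hx : 0 < x) :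
    HasDerivAt (fslProfileDeriv s l) (fslProfileDeriv2 s l x) x := by
  unfold fslProfileDeriv fslProfileDeriv2
  refine hasDerivAt_ite_le (fun _ => ?_) (fun hlx => ?_) ?_ fun hxl => ?_
  · refine ((Real.hasDerivAt_rpow_const (Or.inl hx.ne')).const_mul s).congr_deriv ?_
    ring_nf
  · refine ((hasDerivAt_const x _).sub ((hasDerivAt_const x _).div (hasDerivAt_pow 2 x)
      (pow_ne_zero 2 (hl.trans_le hlx).ne'))).congr_deriv ?_
    field_simp
    ring
  · rw [rpow_eq_rpow_mul_pow_of_eq_add hl 2 (by push_cast; ring : s + 1 = s - 1 + (2 : ℕ))]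
    field_simp
    ring
  · subst hxl
    rw [rpow_eq_rpow_mul_pow_of_eq_add hl 3 (by push_cast; ring : s + 1 = s - 2 + (3 : ℕ))]
    field_simp

lemma fslProfile_nonneg (hs : 0 ≤ s) (hl : 0 < l) (hx : 0 ≤ x) : 0 ≤ fslProfile s l x := by
  unfold fslProfile
  split_ifs with hxl
  · exact Real.rpow_nonneg hx s
  · have hlx : l < x := not_le.1 hxl
    have hx0 : 0 < x := hl.trans hlx
    rw [rpow_eq_rpow_mul_pow_of_eq_add hl 1 (by push_cast; ring : s = s - 1 + (1 : ℕ)),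
      rpow_eq_rpow_mul_pow_of_eq_add hl 2 (by push_cast; ring : s + 1 = s - 1 + (2 : ℕ))]
    -- `2 x l ^ (1 - s) φ(x)`, expanded in powers of `x - l`
    calc (0 : ℝ) ≤ l ^ (s - 1) / (2 * x) *
          (2 * l ^ 2 + 2 * (s + 1) * l * (x - l) + s * (s + 1) * (x - l) ^ 2) := by positivity
      _ = _ := by field_simp; ring

lemma fslProfileDeriv2_nonneg (hs : 1 ≤ s) (hl : 0 ≤ l) (hx : 0 ≤ x) :
    0 ≤ fslProfileDeriv2 s l x := by
  have hs' : 0 ≤ s * (s - 1) := mul_nonneg (by linarith) (by linarith)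
  unfold fslProfileDeriv2
  split_ifs with hxl
  · exact mul_nonneg hs' (Real.rpow_nonneg hx _)
  · exact div_nonneg (mul_nonneg hs' (Real.rpow_nonneg hl _)) (pow_nonneg hx 3)

end Profile

noncomputable def fslDeriv (s l t : ℝ) : ℝ := fslProfileDeriv s l |t| * SignType.sign t

lemma eventually_abs_le_nhds_zero {l : ℝ} (hl : 0 < l) : ∀ᶠ y in 𝓝 (0 : ℝ), |y| ≤ l :=
  (continuous_abs.tendsto' 0 0 abs_zero).eventually (eventually_le_nhds hl)

lemma sign_eventuallyEq_const {t : ℝ} (ht : t ≠ 0) :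
    (fun y : ℝ => (SignType.sign y : ℝ)) =ᶠ[𝓝 t] fun _ => (SignType.sign t : ℝ) := by
  filter_upwards [(continuousAt_sign_of_ne_zero ht).eventually_mem
    ((isOpen_discrete {SignType.sign t}).mem_nhds rfl)] with y hy
  rw [Set.mem_singleton_iff.1 hy]

section Fsl

variable {s l : ℝ}

lemma hasDerivAt_Fsl (hs : 1 < s) (hl : 0 < l) (t : ℝ) :
    HasDerivAt (Fsl s l) (fslDeriv s l t) t := by
  rcases eq_or_ne t 0 with rfl | ht
  · refine ((hasDerivAt_abs_rpow 0 hs).congr_of_eventuallyEq ?_).congr_deriv (by simp [fslDeriv])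
    filter_upwards [eventually_abs_le_nhds_zero hl] with y hy using if_pos hy
  · exact (hasDerivAt_fslProfile hl (abs_pos.2 ht)).comp t (hasDerivAt_abs ht)

lemma hasDerivAt_fslDeriv (hl : 0 < l) {t : ℝ} (ht : t ≠ 0) :
    HasDerivAt (fslDeriv s l) (fslProfileDeriv2 s l |t|) t := by
  have h := ((hasDerivAt_fslProfileDeriv (s := s) hl (abs_pos.2 ht)).comp t
    (hasDerivAt_abs ht)).mul (hasDerivAt_const t (SignType.sign t : ℝ))
  refine (h.congr_of_eventuallyEq ?_).congr_deriv ?_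
  · filter_upwards [sign_eventuallyEq_const ht] with y hy
    simp only [fslDeriv, hy, Pi.mul_apply, Function.comp_apply]
  · rcases ht.lt_or_gt with hneg | hpos
    · simp [hneg]
    · simp [hpos]

lemma fslDeriv_isBigO_one (hs : 1 ≤ s) (hl : 0 < l) :
    fslDeriv s l =O[𝓝 0] fun _ => (1 : ℝ) := by
  refine IsBigO.of_bound s ?_
  filter_upwards [eventually_abs_le_nhds_zero hl, eventually_abs_le_nhds_zero one_pos]
    with t htl ht1
  simp only [fslDeriv, fslProfileDeriv, if_pos htl, norm_mul, Real.norm_eq_abs, norm_one, mul_one]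
  have hsign : |(SignType.sign t : ℝ)| ≤ 1 := by
    rcases lt_trichotomy t 0 with h | h | h <;> simp [h]
  rw [abs_of_nonneg (by linarith : 0 ≤ s), abs_of_nonneg (Real.rpow_nonneg (abs_nonneg t) _)]
  calc s * |t| ^ (s - 1) * |(SignType.sign t : ℝ)| ≤ s * 1 * 1 := by
        gcongr
        exact Real.rpow_le_one (abs_nonneg t) ht1 (by linarith)
    _ = s := by ring

lemma Gsl_eq_mul_fslDeriv (hs : 1 < s) (hl : 0 < l) :
    Gsl s l = fun t => Fsl s l t * fslDeriv s l t :=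
  funext fun t => by rw [Gsl, (hasDerivAt_Fsl hs hl t).deriv]

lemma hasDerivAt_Gsl (hs : 1 < s) (hl : 0 < l) (t : ℝ) :
    HasDerivAt (Gsl s l) (fslDeriv s l t ^ 2 + Fsl s l t * fslProfileDeriv2 s l |t|) t := by
  rw [Gsl_eq_mul_fslDeriv hs hl]
  rcases eq_or_ne t 0 with rfl | ht
  · have hF0 : Fsl s l 0 = 0 := by simp [Fsl, hl.le, (zero_lt_one.trans hs).ne']
    have hF'0 : fslDeriv s l 0 = 0 := by simp [fslDeriv]
    simpa [hF0, hF'0] using (hF'0 ▸ hasDerivAt_Fsl hs hl 0).mul_isBigO_one_of_eq_zero hF0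
      (fslDeriv_isBigO_one hs.le hl)
  · exact ((hasDerivAt_Fsl hs hl t).mul (hasDerivAt_fslDeriv hl ht)).congr_deriv (by ring)

end Fsl

theorem stmt_8 (s l : ℝ) (hs : 1 < s) (hl : 3 ≤ l) (t : ℝ) :
    |deriv (Fsl s l) t| ^ 2 ≤ s ^ 2 * deriv (Gsl s l) t := by
  have hl0 : 0 < l := by linarith
  rw [(hasDerivAt_Fsl hs hl0 t).deriv, (hasDerivAt_Gsl hs hl0 t).deriv, sq_abs]
  have hF : 0 ≤ Fsl s l t := fslProfile_nonneg (by linarith) hl0 (abs_nonneg t)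
  have hF'' := fslProfileDeriv2_nonneg hs.le hl0.le (abs_nonneg t)
  calc fslDeriv s l t ^ 2 ≤ s ^ 2 * fslDeriv s l t ^ 2 :=
        le_mul_of_one_le_left (sq_nonneg _) (by nlinarith)
    _ ≤ s ^ 2 * (fslDeriv s l t ^ 2 + Fsl s l t * fslProfileDeriv2 s l |t|) := by
        gcongr
        exact le_add_of_nonneg_right (mul_nonneg hF hF'')
end

section
/- For fixed s > 1 and 3 ≤ l < k, F_{s,l}(t) ≤ F_{s,k}(t) for every real t; i.e. F_{s,l} is monotone increasing in the parameter l. -/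
noncomputable def fslTail (s m x : ℝ) : ℝ :=
  (1 - s^2) * m ^ s + (1/2) * s * (s+1) * m ^ (s-1) * x + (1/2) * s * (s-1) * m ^ (s+1) * x⁻¹

lemma Fsl_of_abs_le {s l t : ℝ} (h : |t| ≤ l) : Fsl s l t = |t| ^ s := if_pos h

lemma Fsl_of_lt_abs {s l t : ℝ} (h : l < |t|) : Fsl s l t = fslTail s l |t| := if_neg h.not_ge

lemma fslTail_self (s : ℝ) {x : ℝ} (hx : 0 < x) : fslTail s x x = x ^ s := by
  have e₁ : x ^ (s - 1) * x = x ^ s := by rw [← Real.rpow_add_one hx.ne', sub_add_cancel]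
  have e₂ : x ^ (s + 1) * x⁻¹ = x ^ s := by
    rw [Real.rpow_add_one hx.ne', mul_inv_cancel_right₀ hx.ne']
  calc fslTail s x x
      = (1 - s^2) * x ^ s + (1/2) * s * (s+1) * (x ^ (s - 1) * x)
        + (1/2) * s * (s-1) * (x ^ (s + 1) * x⁻¹) := by unfold fslTail; ring
    _ = x ^ s := by rw [e₁, e₂]; ring

lemma hasDerivAt_fslTail (s : ℝ) {m x : ℝ} (hm : 0 < m) (hx : x ≠ 0) :
    HasDerivAt (fun m => fslTail s m x)
      (s * (s^2 - 1) * m ^ (s - 2) * (x - m)^2 / (2 * x)) m := by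
  have hrpow (p : ℝ) := Real.hasDerivAt_rpow_const (x := m) (p := p) (Or.inl hm.ne')
  have h := (((hrpow s).const_mul (1 - s^2)).add
    (((hrpow (s-1)).const_mul ((1/2) * s * (s+1))).mul_const x)).add
    (((hrpow (s+1)).const_mul ((1/2) * s * (s-1))).mul_const x⁻¹)
  refine h.congr_deriv ?_
  have e₁ : m ^ (s - 1) = m ^ (s - 2) * m := by
    rw [← Real.rpow_add_one hm.ne']; ring_nf
  have e₂ : m ^ (s + 1 - 1) = m ^ (s - 2) * m ^ 2 := by
    rw [← Real.rpow_add_natCast hm.ne']; push_cast; ring_nf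
  rw [show s - 1 - 1 = s - 2 by ring, e₁, e₂]
  field_simp
  ring

lemma monotoneOn_fslTail {s x : ℝ} (hs : 1 ≤ s) (hx : 0 < x) :
    MonotoneOn (fun m => fslTail s m x) (Set.Ioi 0) := by
  refine monotoneOn_of_hasDerivWithinAt_nonneg (convex_Ioi 0)
    (fun m hm => (hasDerivAt_fslTail s hm hx.ne').continuousAt.continuousWithinAt)
    (fun m hm => (hasDerivAt_fslTail s (interior_subset hm) hx.ne').hasDerivWithinAt)
    (fun m hm => ?_)
  have hm : 0 < m := interior_subset (s := Set.Ioi (0 : ℝ)) hm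
  have hs' : 0 ≤ s^2 - 1 := by nlinarith
  positivity

theorem stmt_9 (s l k : ℝ) (hs : 1 < s) (hl : 3 ≤ l) (hlk : l < k) (t : ℝ) :
    Fsl s l t ≤ Fsl s k t := by
  have hl₀ : (0 : ℝ) < l := by linarith
  have tail_mono := monotoneOn_fslTail (x := |t|) hs.le
  rcases le_or_gt |t| l with htl | hlt
  · rw [Fsl_of_abs_le htl, Fsl_of_abs_le (htl.trans hlk.le)]
  have ht : 0 < |t| := hl₀.trans hlt
  rw [Fsl_of_lt_abs hlt]
  rcases le_or_gt |t| k with htk | hkt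
  · rw [Fsl_of_abs_le htk, ← fslTail_self s ht]
    exact tail_mono ht hl₀ ht hlt.le
  · rw [Fsl_of_lt_abs hkt]
    exact tail_mono ht hl₀ (hl₀.trans hlk) hlk.le
end

section
/- For s ∈ (1,∞) and l ∈ [3,∞), the function g(t) = t^s - (1-s²)l^s - (1/2)s(s+1)l^{s-1}t - (1/2)s(s-1)l^{s+1}t^{-1} satisfies g(l) = 0 and g'(t) ≥ 0 for all t ≥ l; consequently g(t) ≥ 0 for all t ≥ l. -/
/-!
The derivative `g'(t) = s t^(s-1) - ½ s(s+1) l^(s-1) + ½ s(s-1) l^(s+1) t⁻²` vanishes at `l`,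
and its own derivative `s(s-1) (t^(s+1) - l^(s+1)) / t³` is nonnegative for `t ≥ l`. Hence
`g' ≥ 0` on `[l, ∞)`, so `g` is nondecreasing there, and `g(l) = 0` gives `g ≥ 0`.
-/

open Set

lemma nonneg_of_hasDerivAt_nonneg_Ici {f f' : ℝ → ℝ} {a : ℝ} (ha : f a = 0)
    (hf : ∀ x, a ≤ x → HasDerivAt f (f' x) x) (hf' : ∀ x, a < x → 0 ≤ f' x) :
    ∀ x, a ≤ x → 0 ≤ f x := by
  have hmono : MonotoneOn f (Ici a) :=
    monotoneOn_of_hasDerivWithinAt_nonneg (convex_Ici a)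
      (fun x hx ↦ (hf x hx).continuousAt.continuousWithinAt)
      (fun x hx ↦ (hf x (interior_subset hx)).hasDerivWithinAt)
      (fun x hx ↦ hf' x (by rwa [interior_Ici] at hx))
  intro x hx
  simpa [ha] using hmono self_mem_Ici hx hx

noncomputable section

namespace PowerGap

variable (s l : ℝ)

def g (t : ℝ) : ℝ :=
  t ^ s - (1 - s^2) * l ^ s - (1/2) * s * (s+1) * l ^ (s-1) * t
    - (1/2) * s * (s-1) * l ^ (s+1) * t⁻¹

def g' (t : ℝ) : ℝ :=
  s * t ^ (s-1) - (1/2) * s * (s+1) * l ^ (s-1) + (1/2) * s * (s-1) * l ^ (s+1) * (t^2)⁻¹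

variable {s l}

lemma g_self (hl : 0 < l) : g s l l = 0 := by
  have h₁ : l ^ s = l ^ (s-1) * l := by rw [← Real.rpow_add_one hl.ne']; ring_nf
  have h₂ : l ^ (s+1) = l ^ (s-1) * l * l := by rw [Real.rpow_add_one hl.ne', h₁]
  rw [g, h₁, h₂]
  field_simp
  ring

lemma g'_self (hl : 0 < l) : g' s l l = 0 := by
  have h : l ^ (s+1) = l ^ (s-1) * l ^ 2 := by
    rw [← Real.rpow_natCast, ← Real.rpow_add hl]; ring_nf
  rw [g', h]
  field_simp
  ring

lemma hasDerivAt_g {t : ℝ} (ht : 0 < t) : HasDerivAt (g s l) (g' s l t) t := by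
  have hpow := Real.hasDerivAt_rpow_const (p := s) (Or.inl ht.ne')
  have hinv := hasDerivAt_inv ht.ne'
  refine (((hpow.sub_const ((1 - s^2) * l ^ s)).sub
    ((hasDerivAt_id t).const_mul ((1/2) * s * (s+1) * l ^ (s-1)))).sub
    (hinv.const_mul ((1/2) * s * (s-1) * l ^ (s+1)))).congr_deriv ?_
  simp only [g']
  ring

lemma hasDerivAt_g' {t : ℝ} (ht : 0 < t) :
    HasDerivAt (g' s l) (s * (s-1) * (t ^ (s+1) - l ^ (s+1)) / t^3) t := by
  have hpow := Real.hasDerivAt_rpow_const (p := s - 1) (Or.inl ht.ne')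
  have hinv := (hasDerivAt_pow 2 t).inv (pow_ne_zero 2 ht.ne')
  refine (((hpow.const_mul s).sub_const ((1/2) * s * (s+1) * l ^ (s-1))).add
    (hinv.const_mul ((1/2) * s * (s-1) * l ^ (s+1)))).congr_deriv ?_
  have h : t ^ (s+1) = t ^ (s-1-1) * t ^ 3 := by
    rw [← Real.rpow_natCast, ← Real.rpow_add ht]; ring_nf
  rw [h]
  field_simp
  ring

lemma g'_nonneg (hs : 1 < s) (hl : 0 < l) {t : ℝ} (ht : l ≤ t) : 0 ≤ g' s l t :=
  nonneg_of_hasDerivAt_nonneg_Ici (g'_self hl)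
    (fun x hx ↦ hasDerivAt_g' (hl.trans_le hx))
    (fun x hx ↦ by
      have hx₀ : 0 < x := hl.trans hx
      have hpow : l ^ (s+1) ≤ x ^ (s+1) := Real.rpow_le_rpow hl.le hx.le (by linarith)
      have hcoeff : 0 ≤ s * (s-1) := mul_nonneg (by linarith) (by linarith)
      have : 0 ≤ x ^ (s+1) - l ^ (s+1) := sub_nonneg.mpr hpow
      positivity) t ht

end PowerGap

end

theorem stmt_18 (s l : ℝ) (hs : 1 < s) (hl : 3 ≤ l)
    (g : ℝ → ℝ)
    (hg : g = fun t => t ^ s - (1 - s^2) * l ^ s - (1/2) * s * (s+1) * l ^ (s-1) * t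
        - (1/2) * s * (s-1) * l ^ (s+1) * t⁻¹) :
    g l = 0 ∧ (∀ t, l ≤ t → 0 ≤ deriv g t) ∧ ∀ t, l ≤ t → 0 ≤ g t := by
  have hl₀ : 0 < l := by linarith
  obtain rfl : g = PowerGap.g s l := hg
  refine ⟨PowerGap.g_self hl₀, fun t ht ↦ ?_, ?_⟩
  · rw [(PowerGap.hasDerivAt_g (hl₀.trans_le ht)).deriv]
    exact PowerGap.g'_nonneg hs hl₀ ht
  · exact nonneg_of_hasDerivAt_nonneg_Ici (PowerGap.g_self hl₀)
      (fun t ht ↦ PowerGap.hasDerivAt_g (hl₀.trans_le ht))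
      (fun t ht ↦ PowerGap.g'_nonneg hs hl₀ ht.le)
end
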